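/- arXiv:2011.13900 — 3 statements merged into one kernel-verified Lean document; each statement's English description precedes it below -/
import Mathlib

section
/- If F is a cumulative distribution function on [0,1] with mean μ, and c satisfies 0 < c ≤ μ, then there exists a unique z ∈ [μ - c, 1] such that c = ∫_{z}^{1} (x - z) dF(x), where the integral is with respect to the measure induced by F. -/
open MeasureTheory

/-- Existence and uniqueness of the reservation value: if `μ` is a Borel probability
measure on `[0,1]` with mean `m` and `0 < c ≤ m`, there is a unique `z ∈ [m - c, 1]`
with `c = ∫_{[z,1]} (x - z) dμ`. -/
theorem reservation_value_exists_unique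
    (μ : Measure ℝ) [IsProbabilityMeasure μ]
    (hsupp : μ (Set.Icc 0 1) = 1)
    (m c : ℝ) (hm : m = ∫ x, x ∂μ)
    (hc0 : 0 < c) (hcm : c ≤ m) :
    ∃! z : ℝ, z ∈ Set.Icc (m - c) 1 ∧ c = ∫ x in Set.Icc z 1, (x - z) ∂μ := by
  have hae : ∀ᵐ x ∂μ, x ∈ Set.Icc (0:ℝ) 1 := by
    rw [ae_iff]
    have : {x : ℝ | ¬ x ∈ Set.Icc (0:ℝ) 1} = (Set.Icc (0:ℝ) 1)ᶜ := rfl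
    rw [this, measure_compl measurableSet_Icc (measure_ne_top μ _), hsupp, measure_univ]
    simp
  set h : ℝ → ℝ := fun z => ∫ x, max (x - z) 0 ∂μ with hh
  have hint : ∀ z : ℝ, Integrable (fun x => max (x - z) 0) μ := by
    intro z
    refine (integrable_const (max (1 - z) 0)).mono'
      (((continuous_id.sub continuous_const).max continuous_const).aestronglyMeasurable) ?_
    filter_upwards [hae] with x hx
    rw [Real.norm_eq_abs, abs_of_nonneg (le_max_right _ _)]
    exact max_le_max (by linarith [hx.2]) le_rfl
  have hintx : Integrable (fun x : ℝ => x) μ := by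
    refine (integrable_const (1:ℝ)).mono' aestronglyMeasurable_id ?_
    filter_upwards [hae] with x hx
    rw [Real.norm_eq_abs, abs_le]
    exact ⟨by linarith [hx.1], hx.2⟩
  have hEq : ∀ z : ℝ, z ≤ 1 → (∫ x in Set.Icc z 1, (x - z) ∂μ) = h z := by
    intro z _
    rw [← integral_indicator measurableSet_Icc]
    refine integral_congr_ae ?_
    filter_upwards [hae] with x hx
    by_cases hxz : z ≤ x
    · rw [Set.indicator_of_mem (Set.mem_Icc.mpr ⟨hxz, hx.2⟩), max_eq_left (by linarith)]
    · rw [Set.indicator_of_notMem (fun hmem => hxz hmem.1), max_eq_right (by push_neg at hxz; linarith)]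
  have hlip : LipschitzWith 1 h := by
    refine LipschitzWith.of_dist_le_mul fun a b => ?_
    rw [Real.dist_eq, Real.dist_eq, NNReal.coe_one, one_mul]
    have h1 : h a - h b = ∫ x, (max (x - a) 0 - max (x - b) 0) ∂μ :=
      (integral_sub (hint a) (hint b)).symm
    rw [h1]
    calc |∫ x, (max (x - a) 0 - max (x - b) 0) ∂μ|
        ≤ ∫ x, |max (x - a) 0 - max (x - b) 0| ∂μ := by simpa using norm_integral_le_integral_norm (fun x => max (x - a) 0 - max (x - b) 0)
      _ ≤ ∫ _x, |a - b| ∂μ := by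
          refine integral_mono ((hint a).sub (hint b)).abs (integrable_const _) fun x => ?_
          have := abs_max_sub_max_le_abs (x - a) (x - b) 0
          calc |max (x - a) 0 - max (x - b) 0| ≤ |(x - a) - (x - b)| := this
            _ = |a - b| := by rw [show (x - a) - (x - b) = -(a - b) by ring, abs_neg]
      _ = |a - b| := by simp
  have hmono : ∀ z1 z2 : ℝ, z1 ≤ z2 → h z2 ≤ h z1 := by
    intro z1 z2 hz
    exact integral_mono (hint z2) (hint z1) fun x => max_le_max (by linarith) le_rfl
  have hpos : ∀ z : ℝ, 0 < h z → μ (Set.Ioi z) ≠ 0 := by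
    intro z hz hμ
    have hz0 : h z = 0 := by
      have hae2 : ∀ᵐ x ∂μ, max (x - z) 0 = 0 := by
        rw [ae_iff]
        refine measure_mono_null (fun x hx => ?_) hμ
        simp only [Set.mem_setOf_eq] at hx
        simp only [Set.mem_Ioi]
        by_contra hle
        exact hx (max_eq_right (by push_neg at hle; linarith))
      simpa [hh] using integral_congr_ae hae2
    linarith
  have hstrict : ∀ z1 z2 : ℝ, z1 < z2 → 0 < h z2 → h z2 < h z1 := by
    intro z1 z2 hlt hz2
    have hS := hpos z2 hz2
    have hSr : 0 < (μ (Set.Ioi z2)).toReal := ENNReal.toReal_pos hS (measure_ne_top μ _)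
    have key : (μ (Set.Ioi z2)).toReal * (z2 - z1) ≤ h z1 - h z2 := by
      have hle : ∀ x : ℝ, (Set.Ioi z2).indicator (fun _ => z2 - z1) x
          ≤ max (x - z1) 0 - max (x - z2) 0 := by
        intro x
        by_cases hx : x ∈ Set.Ioi z2
        · rw [Set.indicator_of_mem hx]
          simp only [Set.mem_Ioi] at hx
          rw [max_eq_left (by linarith), max_eq_left (by linarith)]
          linarith
        · rw [Set.indicator_of_notMem hx]
          have := max_le_max (show x - z2 ≤ x - z1 by linarith) (le_refl (0:ℝ))
          linarith
      have := integral_mono ((integrable_const (z2 - z1)).indicator measurableSet_Ioi)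
        ((hint z1).sub (hint z2)) hle
      rw [integral_indicator_const _ measurableSet_Ioi, smul_eq_mul] at this
      simp only [Pi.sub_apply] at this
      rwa [integral_sub (hint z1) (hint z2)] at this
    nlinarith
  -- values at endpoints
  have hm1 : m ≤ 1 := by
    rw [hm]
    calc ∫ x, x ∂μ ≤ ∫ _x, (1:ℝ) ∂μ := by
          refine integral_mono_ae hintx (integrable_const 1) ?_
          filter_upwards [hae] with x hx using hx.2
      _ = 1 := by simp
  have hmc1 : m - c ≤ 1 := by linarith
  have h1 : h 1 = 0 := by
    have hae2 : ∀ᵐ x ∂μ, max (x - 1) 0 = 0 := by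
      filter_upwards [hae] with x hx
      exact max_eq_right (by linarith [hx.2])
    simpa [hh] using integral_congr_ae hae2
  have hmc : c ≤ h (m - c) := by
    have : (∫ x, (x - (m - c)) ∂μ) ≤ h (m - c) :=
      integral_mono (hintx.sub (integrable_const _)) (hint _) fun x => le_max_left _ _
    rwa [integral_sub hintx (integrable_const _), integral_const, probReal_univ,
      one_smul, ← hm, show m - (m - c) = c by ring] at this
  -- existence via IVT
  have hsub : Set.Icc (h 1) (h (m - c)) ⊆ h '' Set.Icc (m - c) 1 :=
    intermediate_value_Icc' hmc1 (hlip.continuous.continuousOn)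
  obtain ⟨z, hzmem, hzval⟩ := hsub ⟨by rw [h1]; exact le_of_lt hc0, hmc⟩
  refine ⟨z, ⟨hzmem, ((hEq z hzmem.2).trans hzval).symm⟩, ?_⟩
  rintro z' ⟨hz'mem, hz'val⟩
  have hz' : h z' = c := (hEq z' hz'mem.2).symm.trans hz'val.symm
  rcases lt_trichotomy z' z with hlt | heq | hgt
  · exact absurd (hstrict z' z hlt (hzval ▸ hc0)) (by rw [hzval, hz']; exact lt_irrefl c)
  · exact heq
  · exact absurd (hstrict z z' hgt (hz' ▸ hc0)) (by rw [hzval, hz']; exact lt_irrefl c)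
end

section
/- Step-payoff fusion deviation is strictly profitable: let μ be a Borel probability measure on [0,1], t ∈ (0,1), p > 0, and define the payoff function V(x) = p if x ≥ t and V(x) = 0 if x < t. Suppose μ([0,t)) > 0 and μ([t,1]) > 0 (with barycenter of μ on [t,1] strictly greater than t, i.e., μ((t,1]) > 0). Then there exists a mean-preserving contraction ν of μ with ∫ V dν > ∫ V dμ. -/
/-!
Fuse all the mass of `μ` on `[t, ∞)` together with a fraction `ε` of the mass on `(-∞, t)` into a
single atom at the barycenter of the fused part. Replacing part of a measure by an atom of the same
mass at its barycenter is a mean-preserving contraction by Jensen's inequality. Since `μ` has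
mass strictly above `t`, the fused part has barycenter `≥ t` for small `ε > 0`, so the atom still
earns `p`, and the fused lower mass `ε · μ (-∞, t)` turns from payoff `0` into payoff `p`.
-/

open MeasureTheory

/-- `ν` is a mean-preserving contraction of `μ`. -/
def IsMPC (μ ν : Measure ℝ) : Prop :=
  ∀ φ : ℝ → ℝ, ConvexOn ℝ (Set.Icc (0 : ℝ) 1) φ → Continuous φ →
    ∫ x, φ x ∂ν ≤ ∫ x, φ x ∂μ

open Set
open scoped NNReal

namespace MeasureTheory.Measure

variable {E : Type*} [NormedAddCommGroup E] [NormedSpace ℝ E] [MeasurableSpace E]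
  (κ : Measure E)

noncomputable def fusion : Measure E :=
  κ univ • dirac (⨍ x, x ∂κ)

theorem fusion_apply_of_average_mem {s : Set E} (hs : ⨍ x, x ∂κ ∈ s) :
    κ.fusion s = κ univ := by
  simp [fusion, dirac_apply_of_mem hs]

theorem fusion_apply_univ : κ.fusion univ = κ univ :=
  κ.fusion_apply_of_average_mem (mem_univ _)

instance [IsFiniteMeasure κ] : IsFiniteMeasure κ.fusion :=
  ⟨by rw [fusion_apply_univ]; exact measure_lt_top κ univ⟩

theorem integral_fusion [MeasurableSingletonClass E] [IsFiniteMeasure κ] (φ : E → ℝ) :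
    ∫ x, φ x ∂κ.fusion = κ.real univ * φ (⨍ x, x ∂κ) := by
  rw [fusion, integral_smul_measure, integral_dirac, smul_eq_mul, measureReal_def]

end MeasureTheory.Measure

open Measure

theorem ConvexOn.integral_fusion_le {E : Type*} [NormedAddCommGroup E] [NormedSpace ℝ E]
    [CompleteSpace E] [MeasurableSpace E] [MeasurableSingletonClass E]
    {s : Set E} {φ : E → ℝ} {κ : Measure E} [IsFiniteMeasure κ]
    (hφ : ConvexOn ℝ s φ) (hφc : ContinuousOn φ s) (hs : IsClosed s)
    (hκs : ∀ᵐ x ∂κ, x ∈ s) (hid : Integrable id κ) (hφi : Integrable φ κ) :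
    ∫ x, φ x ∂κ.fusion ≤ ∫ x, φ x ∂κ := by
  rcases eq_zero_or_neZero κ with rfl | _
  · simp [integral_fusion]
  rw [integral_fusion, ← measure_smul_average κ φ, smul_eq_mul]
  exact mul_le_mul_of_nonneg_left (hφ.map_average_le hφc hs hκs hid hφi) measureReal_nonneg

theorem Continuous.integrable_of_ae_mem_isCompact {X : Type*} [TopologicalSpace X]
    [MeasurableSpace X] [OpensMeasurableSpace X] [T2Space X] {f : X → ℝ} (hf : Continuous f)
    {K : Set X} (hK : IsCompact K) {κ : Measure X} [IsFiniteMeasure κ] (hκK : ∀ᵐ x ∂κ, x ∈ K) :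
    Integrable f κ := by
  rw [← restrict_eq_self_of_ae_mem hκK]
  exact hf.continuousOn.integrableOn_compact hK

theorem isMPC_add_fusion {κ ρ : Measure ℝ} [IsFiniteMeasure κ] [IsFiniteMeasure ρ]
    (hκ : ∀ᵐ x ∂κ, x ∈ Icc (0 : ℝ) 1) (hρ : ∀ᵐ x ∂ρ, x ∈ Icc (0 : ℝ) 1) :
    IsMPC (κ + ρ) (κ.fusion + ρ) := by
  intro φ hφ hφc
  have hφκ := hφc.integrable_of_ae_mem_isCompact isCompact_Icc hκ
  have hφρ := hφc.integrable_of_ae_mem_isCompact isCompact_Icc hρ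
  have hφfus : Integrable φ κ.fusion :=
    (integrable_const (φ (⨍ x, x ∂κ))).congr (ae_eq_dirac φ).symm |>.smul_measure
      (measure_ne_top κ univ)
  rw [integral_add_measure hφfus hφρ, integral_add_measure hφκ hφρ]
  exact add_le_add_left (hφ.integral_fusion_le hφc.continuousOn isClosed_Icc hκ
    (continuous_id.integrable_of_ae_mem_isCompact isCompact_Icc hκ) hφκ) _

theorem le_average_of_integral_sub_nonneg {κ : Measure ℝ} [IsFiniteMeasure κ] [NeZero κ]
    (hid : Integrable id κ) {t : ℝ} (h : 0 ≤ ∫ x, (x - t) ∂κ) : t ≤ ⨍ x, x ∂κ := by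
  have hpos : 0 < κ.real univ := measureReal_univ_pos
  rw [integral_sub (f := fun x => x) hid (integrable_const t), integral_const,
    ← measure_smul_average] at h
  simp only [smul_eq_mul] at h
  nlinarith

theorem exists_average_restrict_add_smul_restrict_ge {μ : Measure ℝ} [IsFiniteMeasure μ]
    (hid : Integrable id μ) {t : ℝ} (habove : 0 < μ (Ioi t)) :
    ∃ ε : ℝ≥0, 0 < ε ∧ ε ≤ 1 ∧ t ≤ ⨍ x, x ∂(μ.restrict (Ici t) + ε • μ.restrict (Iio t)) := by
  have hsub : Integrable (fun x => x - t) μ := hid.sub (integrable_const t)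
  set Δ := ∫ x in Ici t, (x - t) ∂μ
  set D := ∫ x in Iio t, (t - x) ∂μ
  have hΔ : 0 < Δ := by
    rw [setIntegral_pos_iff_support_of_nonneg_ae
      (ae_restrict_of_forall_mem measurableSet_Ici fun x hx => sub_nonneg.2 hx) hsub.integrableOn]
    exact habove.trans_le (measure_mono fun x hx => ⟨sub_ne_zero.2 (ne_of_gt hx), mem_Ici.2 hx.le⟩)
  have hD : 0 ≤ D := setIntegral_nonneg measurableSet_Iio fun x hx => sub_nonneg.2 (le_of_lt hx)
  -- `ε * D ≤ Δ` keeps `∫ (x - t)` over the fused part, which is `Δ - ε * D`, nonnegative.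
  obtain ⟨c, hc0, hc⟩ := exists_pos_mul_lt hΔ D
  set ε : ℝ≥0 := min ⟨c, hc0.le⟩ 1
  have hε0 : 0 < ε := lt_min hc0 one_pos
  have hκ : NeZero (μ.restrict (Ici t) + ε • μ.restrict (Iio t)) := by
    refine ⟨fun h => habove.ne' (le_antisymm ?_ bot_le)⟩
    calc μ (Ioi t) ≤ μ.restrict (Ici t) (Ioi t) := by
          rw [Measure.restrict_apply measurableSet_Ioi, inter_eq_left.2 Ioi_subset_Ici_self]
      _ ≤ (μ.restrict (Ici t) + ε • μ.restrict (Iio t)) (Ioi t) :=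
          Measure.le_add_right le_rfl _
      _ = 0 := by rw [h]; rfl
  refine ⟨ε, hε0, min_le_right _ _, le_average_of_integral_sub_nonneg
    (hid.restrict.add_measure hid.restrict.smul_measure_nnreal) ?_⟩
  rw [integral_add_measure hsub.restrict hsub.restrict.smul_measure_nnreal,
    integral_smul_nnreal_measure, NNReal.smul_def, smul_eq_mul]
  have hneg : ∫ x in Iio t, (x - t) ∂μ = -D := by
    rw [← integral_neg]; simp only [neg_sub]
  have hεD : (ε : ℝ) * D ≤ D * c := by
    rw [mul_comm]; exact mul_le_mul_of_nonneg_left (min_le_left (⟨c, hc0.le⟩ : ℝ≥0) 1) hD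
  rw [hneg]
  nlinarith

theorem fusion_deviation_profitable_general
    (μ : Measure ℝ) [IsProbabilityMeasure μ]
    (hsupp : μ (Set.Icc 0 1) = 1)
    (t p : ℝ) (hp : 0 < p)
    (hbelow : 0 < μ (Set.Ico 0 t)) (habove : 0 < μ (Set.Ioc t 1))
    (V : ℝ → ℝ) (hV : ∀ x, V x = if t ≤ x then p else 0) :
    ∃ ν : Measure ℝ, IsProbabilityMeasure ν ∧ IsMPC μ ν ∧
      ∫ x, V x ∂μ < ∫ x, V x ∂ν := by
  have h01 : ∀ᵐ x ∂μ, x ∈ Icc (0 : ℝ) 1 := (prob_compl_eq_zero_iff measurableSet_Icc).2 hsupp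
  obtain ⟨ε, hε0, hε1, hbary⟩ := exists_average_restrict_add_smul_restrict_ge
    (continuous_id.integrable_of_ae_mem_isCompact isCompact_Icc h01)
    (habove.trans_le (measure_mono Ioc_subset_Ioi_self))
  set κ := μ.restrict (Ici t) + ε • μ.restrict (Iio t)
  set ρ := (1 - ε) • μ.restrict (Iio t)
  have hsplit : κ + ρ = μ := by
    rw [add_assoc, ← add_smul, add_tsub_cancel_of_le hε1, one_smul, ← compl_Ici,
      restrict_add_restrict_compl measurableSet_Ici]
  have hκρ01 : (∀ᵐ x ∂κ, x ∈ Icc (0 : ℝ) 1) ∧ ∀ᵐ x ∂ρ, x ∈ Icc (0 : ℝ) 1 := by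
    rw [← ae_add_measure_iff, hsplit]; exact h01
  obtain rfl : V = (Ici t).indicator fun _ => p := funext fun x => by simp [hV, indicator_apply]
  refine ⟨κ.fusion + ρ, ⟨?_⟩, hsplit ▸ isMPC_add_fusion hκρ01.1 hκρ01.2, ?_⟩
  · rw [Measure.add_apply, fusion_apply_univ, ← Measure.add_apply, hsplit, measure_univ]
  rw [integral_indicator_const _ measurableSet_Ici, integral_indicator_const _ measurableSet_Ici,
    smul_eq_mul, smul_eq_mul, measureReal_def, measureReal_def, mul_lt_mul_iff_left₀ hp,
    ENNReal.toReal_lt_toReal (measure_ne_top _ _) (measure_ne_top _ _),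
    Measure.add_apply, fusion_apply_of_average_mem κ (mem_Ici.2 hbary)]
  calc μ (Ici t) < μ (Ici t) + ε * μ (Iio t) :=
        ENNReal.lt_add_right (measure_ne_top μ _) (mul_ne_zero (by simpa using hε0.ne')
          (hbelow.trans_le (measure_mono Ico_subset_Iio_self)).ne')
    _ = κ univ := by simp [κ]
    _ ≤ κ univ + ρ (Ici t) := le_self_add

/-- Step-payoff fusion deviation is strictly profitable: for the step payoff
`V x = p·1{x ≥ t}` and a prior `μ` with mass both strictly below and strictly above
the threshold `t`, some mean-preserving contraction of `μ` yields a strictly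
higher expected payoff. -/
theorem fusion_deviation_profitable
    (μ : Measure ℝ) [IsProbabilityMeasure μ]
    (hsupp : μ (Set.Icc 0 1) = 1)
    (t p : ℝ) (ht : t ∈ Set.Ioo (0 : ℝ) 1) (hp : 0 < p)
    (hbelow : 0 < μ (Set.Ico 0 t)) (habove : 0 < μ (Set.Ioc t 1))
    (V : ℝ → ℝ) (hV : ∀ x, V x = if t ≤ x then p else 0) :
    ∃ ν : Measure ℝ, IsProbabilityMeasure ν ∧ IsMPC μ ν ∧
      ∫ x, V x ∂μ < ∫ x, V x ∂ν :=
  fusion_deviation_profitable_general μ hsupp t p hp hbelow habove V hV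
end

section
/- Reservation value is antitone in mean-preserving contractions: if ν is a mean-preserving contraction of μ (both Borel probability measures on [0,1]) and z_μ, z_ν are the reservation values solving c = ∫ max(x - z, 0) dμ and c = ∫ max(x - z, 0) dν respectively (assuming solutions exist for c > 0), then z_ν ≤ z_μ. -/
/-!
The excess function `E_ρ z = ∫ max (x - z) 0 dρ` is strictly decreasing wherever it is positive:
lowering `z` to `z' < z` gains at least `(z - z') · ρ [z, ∞)`, and `ρ [z, ∞) > 0` as soon as
`E_ρ z > 0`. Since `x ↦ max (x - z) 0` is convex, `E_ν ≤ E_μ`. If `z_μ < z_ν`, then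
`c = E_ν z_ν < E_ν z_μ ≤ E_μ z_μ = c`.
-/

open MeasureTheory

lemma convexOn_max_sub_const {s : Set ℝ} (hs : Convex ℝ s) (z : ℝ) :
    ConvexOn ℝ s (fun x => max (x - z) 0) :=
  ((convexOn_id hs).sub (concaveOn_const _ hs)).sup (convexOn_const _ hs)

lemma IsMPC.integral_max_sub_le {μ ν : Measure ℝ} (h : IsMPC μ ν) (z : ℝ) :
    ∫ x, max (x - z) 0 ∂ν ≤ ∫ x, max (x - z) 0 ∂μ :=
  h _ (convexOn_max_sub_const (convex_Icc 0 1) z) (by fun_prop)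

lemma max_sub_add_indicator_le {z' z : ℝ} (h : z' ≤ z) (x : ℝ) :
    max (x - z) 0 + (Set.Ici z).indicator (fun _ => z - z') x ≤ max (x - z') 0 := by
  by_cases hx : x ∈ Set.Ici z
  · rw [Set.indicator_of_mem hx, max_eq_left (sub_nonneg.2 hx),
      max_eq_left (sub_nonneg.2 (h.trans hx))]
    linarith
  · rw [Set.indicator_of_notMem hx, max_eq_right (by simpa using (not_le.1 hx).le), zero_add]
    exact le_max_right _ _

section Excess

variable {ρ : Measure ℝ} {z' z : ℝ}

lemma integrable_max_sub_of_integrable [IsFiniteMeasure ρ]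
    (hz : Integrable (fun x => max (x - z) 0) ρ) (z' : ℝ) :
    Integrable (fun x => max (x - z') 0) ρ := by
  refine (hz.add (integrable_const |z - z'|)).mono' (by fun_prop) (ae_of_all _ fun x => ?_)
  rw [Real.norm_of_nonneg (le_max_right _ _), Pi.add_apply]
  exact max_le (by linarith [le_max_left (x - z) 0, le_abs_self (z - z')])
    (add_nonneg (le_max_right _ _) (abs_nonneg _))

lemma measureReal_Ici_pos_of_integral_max_sub_pos [IsFiniteMeasure ρ]
    (hpos : 0 < ∫ x, max (x - z) 0 ∂ρ) : 0 < ρ.real (Set.Ici z) := by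
  refine lt_of_le_of_ne measureReal_nonneg fun h0 => hpos.ne' ?_
  have h_zero_off : ∀ x, x ∉ Set.Ici z → max (x - z) 0 = 0 := fun x hx =>
    max_eq_right (by simpa using (not_le.1 hx).le)
  rw [← setIntegral_eq_integral_of_forall_compl_eq_zero h_zero_off,
    setIntegral_measure_zero _ ((measureReal_eq_zero_iff).1 h0.symm)]

lemma integral_max_sub_lt_of_lt [IsFiniteMeasure ρ] (h : z' < z)
    (hpos : 0 < ∫ x, max (x - z) 0 ∂ρ) :
    ∫ x, max (x - z) 0 ∂ρ < ∫ x, max (x - z') 0 ∂ρ := by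
  have hz : Integrable (fun x => max (x - z) 0) ρ := Integrable.of_integral_ne_zero hpos.ne'
  have hind : Integrable ((Set.Ici z).indicator fun _ => z - z') ρ :=
    (integrable_const _).indicator measurableSet_Ici
  have hgain : 0 < (z - z') * ρ.real (Set.Ici z) :=
    mul_pos (sub_pos.2 h) (measureReal_Ici_pos_of_integral_max_sub_pos hpos)
  calc ∫ x, max (x - z) 0 ∂ρ
      < ∫ x, max (x - z) 0 ∂ρ + (z - z') * ρ.real (Set.Ici z) := lt_add_of_pos_right _ hgain
    _ = ∫ x, max (x - z) 0 + (Set.Ici z).indicator (fun _ => z - z') x ∂ρ := by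
        rw [integral_add hz hind, integral_indicator_const _ measurableSet_Ici, smul_eq_mul,
          mul_comm]
    _ ≤ ∫ x, max (x - z') 0 ∂ρ :=
        integral_mono (hz.add hind) (integrable_max_sub_of_integrable hz z')
          (max_sub_add_indicator_le h.le)

end Excess

theorem reservation_value_antitone_mpc_general
    (μ ν : Measure ℝ) [IsProbabilityMeasure ν]
    (hmpc : IsMPC μ ν)
    (c zμ zν : ℝ) (hc : 0 < c)
    (hzμ : c = ∫ x, max (x - zμ) 0 ∂μ)
    (hzν : c = ∫ x, max (x - zν) 0 ∂ν) :
    zν ≤ zμ := by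
  by_contra! hlt
  have hstrict := integral_max_sub_lt_of_lt hlt (hzν ▸ hc)
  have hmpc_zμ := hmpc.integral_max_sub_le zμ
  linarith

/-- Reservation values are antitone in mean-preserving contractions: if `ν` is a
mean-preserving contraction of `μ` and `z_μ`, `z_ν` solve the reservation-value
equations `c = ∫ max (x - z) 0 d·` for `c > 0`, then `z_ν ≤ z_μ`. -/
theorem reservation_value_antitone_mpc
    (μ ν : Measure ℝ) [IsProbabilityMeasure μ] [IsProbabilityMeasure ν]
    (hμ : μ (Set.Icc 0 1) = 1) (hν : ν (Set.Icc 0 1) = 1)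
    (hmpc : IsMPC μ ν)
    (c zμ zν : ℝ) (hc : 0 < c)
    (hzμ : c = ∫ x, max (x - zμ) 0 ∂μ)
    (hzν : c = ∫ x, max (x - zν) 0 ∂ν) :
    zν ≤ zμ :=
  reservation_value_antitone_mpc_general μ ν hmpc c zμ zν hc hzμ hzν
end
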